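/- Let A be an associative algebra, Ω^nA ≅ A₊ ⊗ A^{⊗n} the module of abstract n-forms, and suppose φ : A^{⊗n} → Ω^{n+1}A is a Hochschild n-cochain with δφ = d^{⊗(n+1)}, the universal (n+1)-cocycle (a₁,…,a_{n+1}) ↦ da₁⋯da_{n+1}. Define α : Ω^kA → Ω^{k+1}A by α(a₀ da₁⋯da_k) = a₀ φ(a₁,…,a_n) da_{n+1}⋯da_k. Then bα + αb = 1 on Ω^kA ≅ C_k(A) for all k ≥ n+1, i.e. α is a contracting homotopy of the Hochschild chain complex in degrees ≥ n+1. -/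

import Mathlib

open scoped TensorProduct
open Finset

section

variable (k A : Type*) [CommRing k] [Ring A] [Algebra k A]

/-- The module of abstract `n`-forms `Ω^n A ≅ A₊ ⊗ A^{⊗n} = C_n(A)`. -/
abbrev CycChain (n : ℕ) : Type _ :=
  Unitization k A ⊗[k] (PiTensorProduct k (fun _ : Fin n => A))

/-- The elementary form `a₀ d(f 0) ⋯ d(f (n-1))` in `Ω^n A`. -/
noncomputable def elemC (n : ℕ) (a₀ : Unitization k A) (f : ℕ → A) : CycChain k A n :=
  a₀ ⊗ₜ[k] PiTensorProduct.tprod k (fun i : Fin n => f (i : ℕ))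

/-- The value of the Hochschild boundary `b` on the elementary chain
`a₀ ⊗ f 0 ⊗ ⋯ ⊗ f n` of degree `n+1`. -/
noncomputable def bElemF (n : ℕ) (a₀ : Unitization k A) (f : ℕ → A) : CycChain k A n :=
  elemC k A n (a₀ * Unitization.inr (f 0)) (fun i => f (i + 1))
  + ∑ j ∈ Finset.range n, ((-1 : ℤ) ^ (j + 1)) •
      elemC k A n a₀
        (fun i => if i < j then f i else if i = j then f j * f (j + 1) else f (i + 1))
  + ((-1 : ℤ) ^ (n + 1)) • elemC k A n (Unitization.inr (f n) * a₀) f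

/-- Degree cast of chain groups. -/
noncomputable def castDeg {m m' : ℕ} (h : m = m') : CycChain k A m ≃ₗ[k] CycChain k A m' :=
  TensorProduct.congr (LinearEquiv.refl k (Unitization k A))
    (PiTensorProduct.reindex k (fun _ : Fin m => A) (finCongr h))

/-- The left action of `A₊` on forms: `a₀ · (c₀ da₁ ⋯ da_n) = (a₀ c₀) da₁ ⋯ da_n`. -/
noncomputable def leftA (m : ℕ) (a₀ : Unitization k A) :
    CycChain k A m →ₗ[k] CycChain k A m :=
  TensorProduct.map (LinearMap.mulLeft k a₀) LinearMap.id

/-- The value of the right action of `b ∈ A` on the elementary form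
`a₀ d(f 0) ⋯ d(f m)` of degree `m+1`, via the Leibniz rule `(dx)y = d(xy) − x(dy)`:
`ω·b = a₀ df₀ ⋯ df_{m−1} d(f_m b) + Σ_j (−1)^{m−j} a₀ df₀ ⋯ d(f_j f_{j+1}) ⋯ df_m db
  + (−1)^{m+1} (a₀ f₀) df₁ ⋯ df_m db`. -/
noncomputable def rElemF (m : ℕ) (a₀ : Unitization k A) (f : ℕ → A) (b : A) :
    CycChain k A (m + 1) :=
  elemC k A (m + 1) a₀ (fun i => if i = m then f m * b else f i)
  + ∑ j ∈ Finset.range m, ((-1 : ℤ) ^ (m - j)) •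
      elemC k A (m + 1) a₀
        (fun i => if i < j then f i else if i = j then f j * f (j + 1)
          else if i = m then b else f (i + 1))
  + ((-1 : ℤ) ^ (m + 1)) •
      elemC k A (m + 1) (a₀ * Unitization.inr (f 0))
        (fun i => if i = m then b else f (i + 1))

end

/-!
Write `ω_f = φ(f 0, …, f (n-1)) ∈ Ω^{n+1}A`, so `α(a₀ df₀ ⋯ df_{n+s}) = a₀ ω_f df_n ⋯ df_{n+s}`.
Iterating `b(ω da) = (-1)^{|ω|}[ω, a]` writes `b(a₀ ω dg₀ ⋯ dg_s)` as `±a₀ (ω g₀) dg₁ ⋯ dg_s`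
minus the faces merging two of the `g`'s and minus `±g_s a₀ ω dg₀ ⋯ dg_{s-1}`. Under `α`, the
faces of `b(a₀ df₀ ⋯ df_{n+s})` merging two of `f n, …, f (n+s)` or moving `f (n+s)` to the front
give exactly these terms with the opposite sign. The remaining faces, together with
`±a₀ (ω_f f_n) df_{n+1} ⋯ df_{n+s}`, make up `a₀ (δφ)(f 0, …, f n) df_{n+1} ⋯ df_{n+s}`, and
`δφ = d^{⊗(n+1)}` turns this back into `a₀ df₀ ⋯ df_{n+s}`.
-/

section Sequences

variable {A : Type*}

def concatAt (m : ℕ) (h g : ℕ → A) : ℕ → A := fun i => if i < m then h i else g (i - m)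

lemma concatAt_self_add (m : ℕ) (f : ℕ → A) : concatAt m f (fun i => f (m + i)) = f :=
  funext fun i => by
    dsimp only [concatAt]
    split_ifs
    · rfl
    · congr 1; omega

lemma concatAt_shift (n : ℕ) (h g : ℕ → A) :
    (fun i => concatAt (n + 1) h g (i + 1))
      = concatAt (n + 1) (fun i => if i = n then g 0 else h (i + 1)) (fun i => g (i + 1)) :=
  funext fun i => by
    dsimp only [concatAt]
    split_ifs <;> first | rfl | omega | (congr 1; omega)

variable [Mul A]

def mergeAt (j : ℕ) (f : ℕ → A) : ℕ → A :=
  fun i => if i < j then f i else if i = j then f j * f (j + 1) else f (i + 1)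

lemma mergeAt_of_lt {i j : ℕ} (h : i < j) (f : ℕ → A) : mergeAt j f i = f i :=
  if_pos h

lemma mergeAt_of_gt {i j : ℕ} (h : j < i) (f : ℕ → A) : mergeAt j f i = f (i + 1) := by
  rw [mergeAt, if_neg (by omega), if_neg (by omega)]

lemma mergeAt_add_apply_add (n t : ℕ) (f : ℕ → A) (i : ℕ) :
    mergeAt (n + t) f (n + i) = mergeAt t (fun i => f (n + i)) i := by
  dsimp only [mergeAt]
  split_ifs <;> first | omega | rfl

lemma mergeAt_concatAt_add (m t : ℕ) (h g : ℕ → A) :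
    mergeAt (m + t) (concatAt m h g) = concatAt m h (mergeAt t g) :=
  funext fun i => by
    dsimp only [mergeAt, concatAt]
    split_ifs <;> first | rfl | omega | (congr 1; omega) | (congr 1 <;> congr 1 <;> omega)

lemma mergeAt_concatAt_self (n : ℕ) (h g : ℕ → A) :
    mergeAt n (concatAt (n + 1) h g)
      = concatAt (n + 1) (fun i => if i = n then h n * g 0 else h i) (fun i => g (i + 1)) :=
  funext fun i => by
    dsimp only [mergeAt, concatAt]
    split_ifs <;> first | rfl | omega | (congr 1; omega) | (congr 2; omega)

lemma mergeAt_concatAt_of_lt {n j : ℕ} (hj : j < n) (h g : ℕ → A) :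
    mergeAt j (concatAt (n + 1) h g)
      = concatAt (n + 1)
          (fun i => if i < j then h i else if i = j then h j * h (j + 1)
            else if i = n then g 0 else h (i + 1))
          (fun i => g (i + 1)) :=
  funext fun i => by
    dsimp only [mergeAt, concatAt]
    split_ifs <;> first | rfl | omega | (congr 1; omega)

end Sequences

section Forms

variable {k A : Type*} [CommRing k] [Ring A] [Algebra k A]

lemma castDeg_elemC {m m' : ℕ} (h : m = m') (a₀ : Unitization k A) (f : ℕ → A) :
    castDeg k A h (elemC k A m a₀ f) = elemC k A m' a₀ f := by
  rw [castDeg, elemC, TensorProduct.congr_tmul, PiTensorProduct.reindex_tprod]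
  rfl

lemma leftA_elemC (m : ℕ) (c a₀ : Unitization k A) (f : ℕ → A) :
    leftA k A m c (elemC k A m a₀ f) = elemC k A m (c * a₀) f :=
  TensorProduct.map_tmul _ _ _ _

lemma linearMap_ext_elemC {m : ℕ} {N : Type*} [AddCommMonoid N] [Module k N]
    {F G : CycChain k A m →ₗ[k] N}
    (h : ∀ (a₀ : Unitization k A) (f : ℕ → A), F (elemC k A m a₀ f) = G (elemC k A m a₀ f)) :
    F = G := by
  refine TensorProduct.ext (LinearMap.ext fun a₀ => PiTensorProduct.ext
    (MultilinearMap.ext fun v => ?_))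
  let f : ℕ → A := fun j => if hj : j < m then v ⟨j, hj⟩ else 0
  have hv : PiTensorProduct.tprod k v = PiTensorProduct.tprod k fun i : Fin m => f i :=
    congrArg _ (funext fun i => by simp [f])
  simp only [LinearMap.compMultilinearMap_apply, LinearMap.compr₂ₛₗ_apply,
    TensorProduct.mk_apply, hv]
  exact h a₀ f

lemma bElemF_eq_mergeAt (m : ℕ) (a₀ : Unitization k A) (f : ℕ → A) :
    bElemF k A m a₀ f = elemC k A m (a₀ * Unitization.inr (f 0)) (fun i => f (i + 1))
      + ∑ j ∈ range m, ((-1 : ℤ) ^ (j + 1)) • elemC k A m a₀ (mergeAt j f)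
      + ((-1 : ℤ) ^ (m + 1)) • elemC k A m (Unitization.inr (f m) * a₀) f :=
  rfl

def IsAppend (app : ∀ m r : ℕ, (ℕ → A) → (CycChain k A m →ₗ[k] CycChain k A (m + r))) : Prop :=
  ∀ (m r : ℕ) (g : ℕ → A) (a₀ : Unitization k A) (f : ℕ → A),
    app m r g (elemC k A m a₀ f) = elemC k A (m + r) a₀ (concatAt m f g)

variable (app : ∀ m r : ℕ, (ℕ → A) → (CycChain k A m →ₗ[k] CycChain k A (m + r)))

/-- `ω ↦ a₀ ω dg₀ ⋯ dg_{s-1}` on `Ω^{n+1}A`. -/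
noncomputable def mulAppend (n s : ℕ) (a₀ : Unitization k A) (g : ℕ → A) :
    CycChain k A (n + 1) →ₗ[k] CycChain k A (n + s + 1) :=
  (castDeg k A (Nat.add_right_comm n 1 s)).toLinearMap ∘ₗ leftA k A (n + 1 + s) a₀ ∘ₗ
    app (n + 1) s g

variable {app}

lemma mulAppend_elemC (happ : IsAppend app) (n s : ℕ) (a₀ u : Unitization k A) (g h : ℕ → A) :
    mulAppend app n s a₀ g (elemC k A (n + 1) u h)
      = elemC k A (n + s + 1) (a₀ * u) (concatAt (n + 1) h g) := by
  simp only [mulAppend, LinearMap.comp_apply, LinearEquiv.coe_coe]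
  rw [happ, leftA_elemC, castDeg_elemC]

lemma mulAppend_mul (happ : IsAppend app) (n s : ℕ) (a₀ c : Unitization k A) (g : ℕ → A) :
    mulAppend app n s (a₀ * c) g = mulAppend app n s a₀ g ∘ₗ leftA k A (n + 1) c :=
  linearMap_ext_elemC fun u h => by
    rw [LinearMap.comp_apply, leftA_elemC, mulAppend_elemC happ, mulAppend_elemC happ, mul_assoc]

end Forms

lemma neg_one_pow_succ_mul_pow_sub {R : Type*} [Monoid R] [HasDistribNeg R] {j n : ℕ}
    (h : j ≤ n) : (-1 : R) ^ (n + 1) * (-1) ^ (n - j) = (-1) ^ (j + 1) := by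
  rw [← pow_add, show n + 1 + (n - j) = j + 1 + 2 * (n - j) by omega, pow_add, pow_mul,
    neg_one_sq, one_pow, mul_one]

section Homotopy

variable {k A : Type*} [CommRing k] [Ring A] [Algebra k A]
  {app : ∀ m r : ℕ, (ℕ → A) → (CycChain k A m →ₗ[k] CycChain k A (m + r))}

/-- The iterated Leibniz rule `b(ω da) = (-1)^{|ω|}[ω, a]`. -/
lemma boundary_comp_mulAppend (happ : IsAppend app)
    (bop : ∀ m : ℕ, CycChain k A (m + 1) →ₗ[k] CycChain k A m)
    (hbop : ∀ (m : ℕ) (a₀ : Unitization k A) (f : ℕ → A),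
      bop m (elemC k A (m + 1) a₀ f) = bElemF k A m a₀ f)
    (n : ℕ) (rA : A → CycChain k A (n + 1) →ₗ[k] CycChain k A (n + 1))
    (hrA : ∀ (b : A) (a₀ : Unitization k A) (f : ℕ → A),
      rA b (elemC k A (n + 1) a₀ f) = rElemF k A n a₀ f b)
    (s : ℕ) (a₀ : Unitization k A) (g : ℕ → A) :
    bop (n + s + 1) ∘ₗ mulAppend app n (s + 1) a₀ g
      = ((-1 : ℤ) ^ (n + 1)) • mulAppend app n s a₀ (fun i => g (i + 1)) ∘ₗ rA (g 0)
        - ∑ t ∈ range s, ((-1 : ℤ) ^ (n + t + 1)) • mulAppend app n s a₀ (mergeAt t g)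
        - ((-1 : ℤ) ^ (n + s + 1)) • mulAppend app n s (Unitization.inr (g s) * a₀) g := by
  refine linearMap_ext_elemC fun u h => ?_
  have hL : (bop (n + s + 1) ∘ₗ mulAppend app n (s + 1) a₀ g) (elemC k A (n + 1) u h)
      = bElemF k A (n + s + 1) (a₀ * u) (concatAt (n + 1) h g) := by
    rw [LinearMap.comp_apply, mulAppend_elemC happ]
    exact hbop _ _ _
  have hlow : ∀ j ∈ range n,
      ((-1 : ℤ) ^ (j + 1)) • elemC k A (n + s + 1) (a₀ * u) (mergeAt j (concatAt (n + 1) h g))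
      = ((-1 : ℤ) ^ (n + 1)) • ((-1 : ℤ) ^ (n - j)) • elemC k A (n + s + 1) (a₀ * u)
          (concatAt (n + 1) (fun i => if i < j then h i else if i = j then h j * h (j + 1)
            else if i = n then g 0 else h (i + 1)) fun i => g (i + 1)) := fun j hj => by
    rw [mergeAt_concatAt_of_lt (mem_range.mp hj), smul_smul,
      neg_one_pow_succ_mul_pow_sub (mem_range.mp hj).le]
  have hhigh : ∀ t ∈ range s, ((-1 : ℤ) ^ (n + 1 + t + 1)) • elemC k A (n + s + 1) (a₀ * u)
      (mergeAt (n + 1 + t) (concatAt (n + 1) h g))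
      = -(((-1 : ℤ) ^ (n + t + 1)) • elemC k A (n + s + 1) (a₀ * u)
          (concatAt (n + 1) h (mergeAt t g))) := fun t _ => by
    rw [mergeAt_concatAt_add, show n + 1 + t + 1 = n + t + 1 + 1 by omega, pow_succ, mul_neg_one,
      neg_smul]
  have hlast : concatAt (n + 1) h g (n + s + 1) = g s := by simp [concatAt]
  -- the faces of `b` inside `h`, the one joining `h n` to `g 0`, and those inside `g`
  rw [hL, bElemF_eq_mergeAt,
    show range (n + s + 1) = range (n + 1 + s) by rw [Nat.add_right_comm], sum_range_add,
    sum_range_succ, sum_congr rfl hlow, sum_congr rfl hhigh, hlast, concatAt_shift,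
    mergeAt_concatAt_self, show concatAt (n + 1) h g 0 = h 0 from if_pos n.succ_pos]
  simp only [LinearMap.sub_apply, LinearMap.smul_apply, LinearMap.sum_apply,
    LinearMap.comp_apply, hrA, rElemF, map_add, map_sum, map_zsmul, mulAppend_elemC happ]
  have hsq : (-1 : ℤ) ^ (n + 1) * (-1) ^ (n + 1) = 1 := by
    rw [← pow_add, ← two_mul, pow_mul, neg_one_sq, one_pow]
  simp only [smul_add, smul_sum, smul_smul, hsq, one_smul, mul_assoc,
    pow_succ (-1 : ℤ) (n + s + 1), mul_neg_one, neg_smul, sum_neg_distrib]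
  abel

variable {n : ℕ}

/-- `(δφ)(f 0, …, f n)`, for the right action `rA` of `A` on `Ω^{n+1}A`. -/
noncomputable def coboundaryAt (rA : A → CycChain k A (n + 1) →ₗ[k] CycChain k A (n + 1))
    (φ : MultilinearMap k (fun _ : Fin n => A) (CycChain k A (n + 1))) (f : ℕ → A) :
    CycChain k A (n + 1) :=
  leftA k A (n + 1) (Unitization.inr (f 0)) (φ fun i => f (i + 1))
    + ∑ j ∈ range n, ((-1 : ℤ) ^ (j + 1)) • φ (fun i => mergeAt j f i)
    + ((-1 : ℤ) ^ (n + 1)) • rA (f n) (φ fun i => f i)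

lemma mulAppend_elemC_one (happ : IsAppend app) (s : ℕ) (a₀ : Unitization k A) (f : ℕ → A) :
    mulAppend app n s a₀ (fun i => f (n + 1 + i)) (elemC k A (n + 1) 1 f)
      = elemC k A (n + s + 1) a₀ f := by
  rw [mulAppend_elemC happ, mul_one, concatAt_self_add]

lemma boundary_alpha_elemC (happ : IsAppend app)
    (bop : ∀ m : ℕ, CycChain k A (m + 1) →ₗ[k] CycChain k A m)
    (hbop : ∀ (m : ℕ) (a₀ : Unitization k A) (f : ℕ → A),
      bop m (elemC k A (m + 1) a₀ f) = bElemF k A m a₀ f)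
    (rA : A → CycChain k A (n + 1) →ₗ[k] CycChain k A (n + 1))
    (hrA : ∀ (b : A) (a₀ : Unitization k A) (f : ℕ → A),
      rA b (elemC k A (n + 1) a₀ f) = rElemF k A n a₀ f b)
    (φ : MultilinearMap k (fun _ : Fin n => A) (CycChain k A (n + 1)))
    (α : ∀ s : ℕ, CycChain k A (n + s) →ₗ[k] CycChain k A (n + s + 1))
    (hα : ∀ (s : ℕ) (a₀ : Unitization k A) (f : ℕ → A),
      α s (elemC k A (n + s) a₀ f) = mulAppend app n s a₀ (fun i => f (n + i)) (φ fun i => f i))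
    (s : ℕ) (a₀ : Unitization k A) (f : ℕ → A) :
    bop (n + s + 1) (α (s + 1) (elemC k A (n + s + 1) a₀ f))
      = ((-1 : ℤ) ^ (n + 1)) •
          mulAppend app n s a₀ (fun i => f (n + 1 + i)) (rA (f n) (φ fun i => f i))
        - ∑ t ∈ range s, ((-1 : ℤ) ^ (n + t + 1)) •
            mulAppend app n s a₀ (mergeAt t fun i => f (n + i)) (φ fun i => f i)
        - ((-1 : ℤ) ^ (n + s + 1)) •
            mulAppend app n s (Unitization.inr (f (n + s)) * a₀) (fun i => f (n + i))
              (φ fun i => f i) := by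
  have hshift : (fun i => f (n + (i + 1))) = fun i => f (n + 1 + i) :=
    funext fun i => congrArg f (by omega)
  rw [show α (s + 1) (elemC k A (n + s + 1) a₀ f) = _ from hα (s + 1) a₀ f,
    ← LinearMap.comp_apply, boundary_comp_mulAppend happ bop hbop n rA hrA, add_zero, hshift]
  simp only [LinearMap.sub_apply, LinearMap.smul_apply, LinearMap.sum_apply, LinearMap.comp_apply]

lemma alpha_boundary_elemC (happ : IsAppend app)
    (bop : ∀ m : ℕ, CycChain k A (m + 1) →ₗ[k] CycChain k A m)
    (hbop : ∀ (m : ℕ) (a₀ : Unitization k A) (f : ℕ → A),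
      bop m (elemC k A (m + 1) a₀ f) = bElemF k A m a₀ f)
    (φ : MultilinearMap k (fun _ : Fin n => A) (CycChain k A (n + 1)))
    (α : ∀ s : ℕ, CycChain k A (n + s) →ₗ[k] CycChain k A (n + s + 1))
    (hα : ∀ (s : ℕ) (a₀ : Unitization k A) (f : ℕ → A),
      α s (elemC k A (n + s) a₀ f) = mulAppend app n s a₀ (fun i => f (n + i)) (φ fun i => f i))
    (s : ℕ) (a₀ : Unitization k A) (f : ℕ → A) :
    α s (bop (n + s) (elemC k A (n + s + 1) a₀ f))
      = mulAppend app n s a₀ (fun i => f (n + 1 + i))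
          (leftA k A (n + 1) (Unitization.inr (f 0)) (φ fun i => f (i + 1))
            + ∑ j ∈ range n, ((-1 : ℤ) ^ (j + 1)) • φ (fun i => mergeAt j f i))
        + ∑ t ∈ range s, ((-1 : ℤ) ^ (n + t + 1)) •
            mulAppend app n s a₀ (mergeAt t fun i => f (n + i)) (φ fun i => f i)
        + ((-1 : ℤ) ^ (n + s + 1)) •
            mulAppend app n s (Unitization.inr (f (n + s)) * a₀) (fun i => f (n + i))
              (φ fun i => f i) := by
  have hshift : (fun i => f (n + i + 1)) = fun i => f (n + 1 + i) :=
    funext fun i => congrArg f (by omega)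
  have hlow : ∀ j ∈ range n, ((-1 : ℤ) ^ (j + 1)) • α s (elemC k A (n + s) a₀ (mergeAt j f))
      = ((-1 : ℤ) ^ (j + 1)) • mulAppend app n s a₀ (fun i => f (n + 1 + i))
          (φ fun i => mergeAt j f i) := fun j hj => by
    have hj : j < n := mem_range.mp hj
    have hskip : (fun i => mergeAt j f (n + i)) = fun i => f (n + 1 + i) :=
      funext fun i => by rw [mergeAt_of_gt (by omega), Nat.add_right_comm]
    rw [hα, hskip]
  have hhigh : ∀ t ∈ range s,
      ((-1 : ℤ) ^ (n + t + 1)) • α s (elemC k A (n + s) a₀ (mergeAt (n + t) f))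
      = ((-1 : ℤ) ^ (n + t + 1)) • mulAppend app n s a₀ (mergeAt t fun i => f (n + i))
          (φ fun i => f i) := fun t _ => by
    rw [hα, funext (mergeAt_add_apply_add n t f)]
    congr 3
    exact funext fun i => mergeAt_of_lt (by omega) f
  rw [hbop, bElemF_eq_mergeAt, map_add, map_add, map_sum, sum_range_add]
  simp only [map_zsmul]
  rw [sum_congr rfl hlow, sum_congr rfl hhigh, hα, hα, hshift, mulAppend_mul happ, map_add,
    map_sum, LinearMap.comp_apply]
  simp only [map_zsmul, add_assoc]

end Homotopy

/-- Let `A` be an algebra, `Ω^n A ≅ A₊ ⊗ A^{⊗n}` the abstract `n`-forms, and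
`φ : A^{⊗n} → Ω^{n+1}A` a Hochschild `n`-cochain with `δφ = d^{⊗(n+1)}` (the universal
`(n+1)`-cocycle).  Define `α : Ω^k A → Ω^{k+1} A` by
`α(a₀ da₁ ⋯ da_k) = a₀ φ(a₁,…,a_n) da_{n+1} ⋯ da_k`.  Then `bα + αb = 1` on
`Ω^k A ≅ C_k(A)` for all `k ≥ n+1`.  (The operators `b`, the right `A`-action on
`Ω^{n+1}A`, the tensor-appending maps and `α` are hypothesized as linear maps, uniquely
determined by their stated values on elementary tensors.) -/
theorem stmt19 {k A : Type*} [CommRing k] [Ring A] [Algebra k A] (n : ℕ)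
    -- the Hochschild boundary `b`
    (bop : ∀ m : ℕ, CycChain k A (m + 1) →ₗ[k] CycChain k A m)
    (hbop : ∀ (m : ℕ) (a₀ : Unitization k A) (f : ℕ → A),
      bop m (elemC k A (m + 1) a₀ f) = bElemF k A m a₀ f)
    -- the right `A`-module structure of the bimodule `Ω^{n+1}A`
    (rA : A → CycChain k A (n + 1) →ₗ[k] CycChain k A (n + 1))
    (hrA : ∀ (b : A) (a₀ : Unitization k A) (f : ℕ → A),
      rA b (elemC k A (n + 1) a₀ f) = rElemF k A n a₀ f b)
    -- appending differentials: `ω ↦ ω d(g 0) ⋯ d(g (r-1))`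
    (app : ∀ m r : ℕ, (ℕ → A) → (CycChain k A m →ₗ[k] CycChain k A (m + r)))
    (happ : ∀ (m r : ℕ) (g : ℕ → A) (a₀ : Unitization k A) (f : ℕ → A),
      app m r g (elemC k A m a₀ f)
        = elemC k A (m + r) a₀ (fun i => if i < m then f i else g (i - m)))
    -- the cochain `φ` with `δφ` equal to the universal cocycle `d^{⊗(n+1)}`
    (φ : MultilinearMap k (fun _ : Fin n => A) (CycChain k A (n + 1)))
    (hφ : ∀ f : ℕ → A,
      leftA k A (n + 1) (Unitization.inr (f 0))
          (PiTensorProduct.lift φ (PiTensorProduct.tprod k (fun i : Fin n => f ((i : ℕ) + 1))))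
        + ∑ j ∈ Finset.range n, ((-1 : ℤ) ^ (j + 1)) •
            PiTensorProduct.lift φ (PiTensorProduct.tprod k
              (fun i : Fin n => if (i : ℕ) < j then f (i : ℕ)
                else if (i : ℕ) = j then f j * f (j + 1) else f ((i : ℕ) + 1)))
        + ((-1 : ℤ) ^ (n + 1)) •
            rA (f n) (PiTensorProduct.lift φ (PiTensorProduct.tprod k
              (fun i : Fin n => f (i : ℕ))))
        = elemC k A (n + 1) 1 f)
    -- the operator `α`
    (α : ∀ s : ℕ, CycChain k A (n + s) →ₗ[k] CycChain k A (n + s + 1))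
    (hα : ∀ (s : ℕ) (a₀ : Unitization k A) (f : ℕ → A),
      α s (elemC k A (n + s) a₀ f)
        = castDeg k A (by omega : (n + 1) + s = n + s + 1)
            (leftA k A ((n + 1) + s) a₀
              (app (n + 1) s (fun i => f (n + i))
                (PiTensorProduct.lift φ (PiTensorProduct.tprod k
                  (fun i : Fin n => f (i : ℕ))))))) :
    ∀ (s : ℕ) (x : CycChain k A (n + s + 1)),
      bop (n + s + 1) (α (s + 1) x) + α s (bop (n + s) x) = x := by
  have hαmul : ∀ (s : ℕ) (a₀ : Unitization k A) (f : ℕ → A), α s (elemC k A (n + s) a₀ f)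
      = mulAppend app n s a₀ (fun i => f (n + i)) (φ fun i => f i) := fun s a₀ f => by
    rw [hα, PiTensorProduct.lift.tprod]
    rfl
  have hδφ : ∀ f : ℕ → A, coboundaryAt rA φ f = elemC k A (n + 1) 1 f := fun f => by
    simpa only [coboundaryAt, mergeAt, PiTensorProduct.lift.tprod] using hφ f
  intro s
  suffices h : bop (n + s + 1) ∘ₗ α (s + 1) + α s ∘ₗ bop (n + s) = LinearMap.id from
    LinearMap.congr_fun h
  refine linearMap_ext_elemC (m := n + s + 1) fun a₀ f => ?_
  rw [LinearMap.add_apply, LinearMap.comp_apply, LinearMap.comp_apply, LinearMap.id_apply,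
    boundary_alpha_elemC happ bop hbop rA hrA φ α hαmul,
    alpha_boundary_elemC happ bop hbop φ α hαmul, ← mulAppend_elemC_one happ, ← hδφ, coboundaryAt]
  simp only [map_add, map_zsmul]
  abel
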